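/- arXiv:2305.17608 — 5 statements merged into one kernel-verified Lean document; each statement's English description precedes it below -/
import Mathlib

section
/- Let n ≥ 2 and let U : [−1,1] → ℝ be strictly concave and strictly increasing. Then the maximizer of S(r₁,…,rₙ) = Σ_{1≤i<j≤n} U(r_i − r_j) over [0,1]ⁿ is unique. -/
/-!
If `r` and `s` both maximize `S`, strict concavity of `U` makes `S` at their midpoint exceed
`(S r + S s) / 2` unless every difference `rᵢ - rⱼ` equals `sᵢ - sⱼ`; so `r - s` is constant.
Raising the first coordinate raises every term `U (r₀ - rⱼ)` it occurs in, so every maximizer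
has `r₀ = 1`, and the constant is `0`.
-/

open Finset Set

theorem StrictConcaveOn.add_div_two_lt_apply_add_div_two {s : Set ℝ} {f : ℝ → ℝ}
    (hf : StrictConcaveOn ℝ s f) {x y : ℝ} (hx : x ∈ s) (hy : y ∈ s) (hxy : x ≠ y) :
    (f x + f y) / 2 < f ((x + y) / 2) := by
  have h := hf.2 hx hy hxy (by norm_num : (0 : ℝ) < 1 / 2) (by norm_num : (0 : ℝ) < 1 / 2)
    (by norm_num)
  rwa [smul_eq_mul, smul_eq_mul, smul_eq_mul, smul_eq_mul, ← mul_add, ← mul_add,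
    one_div_mul_eq_div, one_div_mul_eq_div] at h

theorem ConcaveOn.add_div_two_le_apply_add_div_two {s : Set ℝ} {f : ℝ → ℝ}
    (hf : ConcaveOn ℝ s f) {x y : ℝ} (hx : x ∈ s) (hy : y ∈ s) :
    (f x + f y) / 2 ≤ f ((x + y) / 2) := by
  have h := hf.2 hx hy (by norm_num : (0 : ℝ) ≤ 1 / 2) (by norm_num : (0 : ℝ) ≤ 1 / 2)
    (by norm_num)
  rwa [smul_eq_mul, smul_eq_mul, smul_eq_mul, smul_eq_mul, ← mul_add, ← mul_add,
    one_div_mul_eq_div, one_div_mul_eq_div] at h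

theorem sub_mem_Icc_neg_one_one {x y : ℝ} (hx : x ∈ Icc (0 : ℝ) 1) (hy : y ∈ Icc (0 : ℝ) 1) :
    x - y ∈ Icc (-1 : ℝ) 1 :=
  ⟨by linarith [hx.1, hy.2], by linarith [hx.2, hy.1]⟩

section PairSum

variable {ι : Type*} [Fintype ι] [LinearOrder ι] [LocallyFiniteOrderTop ι]

/-- The paper's `S(u) = ∑_{i<j} U(uᵢ - uⱼ)`. -/
def pairSum (U : ℝ → ℝ) (u : ι → ℝ) : ℝ :=
  ∑ i, ∑ j ∈ Ioi i, U (u i - u j)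

theorem add_div_two_lt_pairSum {U : ℝ → ℝ} (hU : StrictConcaveOn ℝ (Icc (-1) 1) U)
    {r s : ι → ℝ} (hr : ∀ k, r k ∈ Icc (0 : ℝ) 1) (hs : ∀ k, s k ∈ Icc (0 : ℝ) 1)
    {i j : ι} (hij : i < j) (hne : r i - r j ≠ s i - s j) :
    (pairSum U r + pairSum U s) / 2 < pairSum U fun k => (r k + s k) / 2 := by
  have hmid : ∀ k l, (r k + s k) / 2 - (r l + s l) / 2 = (r k - r l + (s k - s l)) / 2 :=
    fun k l => by ring
  have hterm : ∀ k l, (U (r k - r l) + U (s k - s l)) / 2 ≤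
      U ((r k + s k) / 2 - (r l + s l) / 2) := fun k l =>
    hmid k l ▸ hU.concaveOn.add_div_two_le_apply_add_div_two
      (sub_mem_Icc_neg_one_one (hr k) (hr l)) (sub_mem_Icc_neg_one_one (hs k) (hs l))
  have hstrict : (U (r i - r j) + U (s i - s j)) / 2 < U ((r i + s i) / 2 - (r j + s j) / 2) :=
    hmid i j ▸ hU.add_div_two_lt_apply_add_div_two
      (sub_mem_Icc_neg_one_one (hr i) (hr j)) (sub_mem_Icc_neg_one_one (hs i) (hs j)) hne
  have havg : (pairSum U r + pairSum U s) / 2 =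
      ∑ k, ∑ l ∈ Ioi k, (U (r k - r l) + U (s k - s l)) / 2 := by
    simp only [pairSum, ← sum_add_distrib, sum_div]
  rw [havg, pairSum]
  exact sum_lt_sum (fun k _ => sum_le_sum fun l _ => hterm k l)
    ⟨i, mem_univ i, sum_lt_sum (fun l _ => hterm i l) ⟨j, Finset.mem_Ioi.2 hij, hstrict⟩⟩

theorem sub_eq_sub_of_isMaxOn_pairSum {U : ℝ → ℝ} (hU : StrictConcaveOn ℝ (Icc (-1) 1) U)
    {r s : ι → ℝ} (hr : ∀ k, r k ∈ Icc (0 : ℝ) 1) (hs : ∀ k, s k ∈ Icc (0 : ℝ) 1)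
    (hrmax : IsMaxOn (pairSum U) (univ.pi fun _ => Icc 0 1) r)
    (hsmax : IsMaxOn (pairSum U) (univ.pi fun _ => Icc 0 1) s) {i j : ι} (hij : i < j) :
    r i - r j = s i - s j := by
  by_contra hne
  have hmid : (fun k => (r k + s k) / 2) ∈ univ.pi fun _ => Icc (0 : ℝ) 1 :=
    mem_univ_pi.2 fun k =>
      ⟨by linarith [(hr k).1, (hs k).1], by linarith [(hr k).2, (hs k).2]⟩
  linarith [add_div_two_lt_pairSum hU hr hs hij hne, isMaxOn_iff.1 hrmax _ hmid,
    isMaxOn_iff.1 hsmax _ hmid]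

theorem apply_bot_eq_one_of_isMaxOn_pairSum [OrderBot ι] [Nontrivial ι] {U : ℝ → ℝ}
    (hU : StrictMonoOn U (Icc (-1) 1)) {r : ι → ℝ} (hr : ∀ k, r k ∈ Icc (0 : ℝ) 1)
    (hrmax : IsMaxOn (pairSum U) (univ.pi fun _ => Icc 0 1) r) : r ⊥ = 1 := by
  by_contra hne
  have hlt : r ⊥ < 1 := lt_of_le_of_ne (hr ⊥).2 hne
  set u := Function.update r ⊥ 1
  have hu : ∀ k, u k ∈ Icc (0 : ℝ) 1 := by
    intro k
    rcases eq_or_ne k ⊥ with rfl | hk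
    · simp [u]
    · simpa [u, hk] using hr k
  have hbump : ∀ l ∈ Finset.Ioi ⊥, U (r ⊥ - r l) < U (u ⊥ - u l) := by
    intro l hl
    have hl : l ≠ ⊥ := (Finset.mem_Ioi.1 hl).ne'
    simp only [u, Function.update_self, Function.update_of_ne hl]
    exact hU (sub_mem_Icc_neg_one_one (hr ⊥) (hr l))
      (sub_mem_Icc_neg_one_one ⟨zero_le_one, le_rfl⟩ (hr l)) (by linarith)
  have hsum : pairSum U r < pairSum U u := by
    refine sum_lt_sum (fun k _ => ?_) ⟨⊥, mem_univ _, sum_lt_sum_of_nonempty ?_ hbump⟩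
    · rcases eq_or_ne k ⊥ with rfl | hk
      · exact sum_le_sum fun l hl => (hbump l hl).le
      · refine (sum_congr rfl fun l hl => ?_).le
        simp [u, hk, ne_bot_of_gt (Finset.mem_Ioi.1 hl)]
    · obtain ⟨j, hj⟩ := exists_ne (⊥ : ι)
      exact ⟨j, Finset.mem_Ioi.2 (bot_lt_iff_ne_bot.2 hj)⟩
  exact (isMaxOn_iff.1 hrmax u (mem_univ_pi.2 hu)).not_gt hsum

end PairSum

/-- If `U` is strictly concave and strictly increasing on `[-1,1]`,
then the maximizer of `S(r) = ∑_{i<j} U(r_i - r_j)` over `[0,1]^n` is unique. -/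
theorem stmt2 (n : ℕ) (hn : 2 ≤ n) (U : ℝ → ℝ)
    (hUconc : StrictConcaveOn ℝ (Set.Icc (-1 : ℝ) 1) U)
    (hUmono : StrictMonoOn U (Set.Icc (-1 : ℝ) 1))
    (r s : Fin n → ℝ)
    (hr : ∀ i, r i ∈ Set.Icc (0 : ℝ) 1) (hs : ∀ i, s i ∈ Set.Icc (0 : ℝ) 1)
    (hropt : ∀ u : Fin n → ℝ, (∀ i, u i ∈ Set.Icc (0 : ℝ) 1) →
      (∑ i : Fin n, ∑ j ∈ Finset.Ioi i, U (u i - u j)) ≤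
        ∑ i : Fin n, ∑ j ∈ Finset.Ioi i, U (r i - r j))
    (hsopt : ∀ u : Fin n → ℝ, (∀ i, u i ∈ Set.Icc (0 : ℝ) 1) →
      (∑ i : Fin n, ∑ j ∈ Finset.Ioi i, U (u i - u j)) ≤
        ∑ i : Fin n, ∑ j ∈ Finset.Ioi i, U (s i - s j)) :
    r = s := by
  have : NeZero n := ⟨by omega⟩
  have : Nontrivial (Fin n) := Fin.nontrivial_iff_two_le.2 hn
  have hrmax : IsMaxOn (pairSum U) (univ.pi fun _ => Icc 0 1) r :=
    isMaxOn_iff.2 fun u hu => hropt u (mem_univ_pi.1 hu)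
  have hsmax : IsMaxOn (pairSum U) (univ.pi fun _ => Icc 0 1) s :=
    isMaxOn_iff.2 fun u hu => hsopt u (mem_univ_pi.1 hu)
  have hbot : r ⊥ = s ⊥ := by
    rw [apply_bot_eq_one_of_isMaxOn_pairSum hUmono hr hrmax,
      apply_bot_eq_one_of_isMaxOn_pairSum hUmono hs hsmax]
  funext j
  rcases eq_or_ne j ⊥ with rfl | hj
  · exact hbot
  · linarith [sub_eq_sub_of_isMaxOn_pairSum hUconc hr hs hrmax hsmax (bot_lt_iff_ne_bot.2 hj)]
end

section
/- Let n ≥ 2 and let U : [−1,1] → ℝ be strongly concave with parameter μ > 0. Let r̂ ∈ [0,1]ⁿ maximize S(r₁,…,rₙ) = Σ_{1≤i<j≤n} U(r_i − r_j) over [0,1]ⁿ, and let u ∈ [0,1]ⁿ satisfy u₁ ≥ ⋯ ≥ uₙ. Then S(u) − S(r̂) ≤ −(nμ/2)·‖Proj_{Vₙ}(u − r̂)‖², where Vₙ ⊂ ℝⁿ is the subspace orthogonal to (1,1,…,1), Proj_{Vₙ} is the orthogonal projection onto Vₙ, and ‖·‖ is the Euclidean norm. -/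
open Finset Set

/-- If `U` is `μ`-strongly concave on `[-1,1]`, `r` maximizes
`S` over `[0,1]^n` and `u ∈ [0,1]^n` is nonincreasing, then
`S(u) - S(r) ≤ -(nμ/2)‖Proj_{Vₙ}(u - r)‖²`, where the squared norm of the
projection onto the orthogonal complement of `(1,…,1)` is
`∑ i ((u-r)_i - mean(u-r))²`. -/
theorem stmt4 (n : ℕ) (hn : 2 ≤ n) (U : ℝ → ℝ) (μ : ℝ) (hμ : 0 < μ)
    (hUconc : ConcaveOn ℝ (Set.Icc (-1 : ℝ) 1) (fun x => U x + μ / 2 * x ^ 2))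
    (r : Fin n → ℝ) (hr : ∀ i, r i ∈ Set.Icc (0 : ℝ) 1)
    (hropt : ∀ s : Fin n → ℝ, (∀ i, s i ∈ Set.Icc (0 : ℝ) 1) →
      (∑ i : Fin n, ∑ j ∈ Finset.Ioi i, U (s i - s j)) ≤
        ∑ i : Fin n, ∑ j ∈ Finset.Ioi i, U (r i - r j))
    (u : Fin n → ℝ) (hu : ∀ i, u i ∈ Set.Icc (0 : ℝ) 1)
    (hmono : ∀ i j : Fin n, i ≤ j → u j ≤ u i) :
    (∑ i : Fin n, ∑ j ∈ Finset.Ioi i, U (u i - u j)) -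
        (∑ i : Fin n, ∑ j ∈ Finset.Ioi i, U (r i - r j)) ≤
      -(n * μ / 2) *
        ∑ i : Fin n, ((u i - r i) - (∑ j : Fin n, (u j - r j)) / n) ^ 2 := by
  have hn0 : (0 : ℝ) < (n : ℝ) := by
    have : 0 < n := lt_of_lt_of_le two_pos hn
    exact_mod_cast this
  set d : Fin n → ℝ := fun i => u i - r i with hdd
  set T : ℝ := ∑ j : Fin n, d j with hTdef
  set P : ℝ := ∑ j : Fin n, (d j) ^ 2 with hPdef
  set Q : ℝ := ∑ i : Fin n, (d i - T / n) ^ 2 with hQdef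
  set B : ℝ := ∑ i : Fin n, ∑ j ∈ Finset.Ioi i, (d i - d j) ^ 2 with hBdef
  -- inner expansion lemma
  have inner : ∀ x : ℝ, ∑ j : Fin n, (d j - x) ^ 2 = P - 2 * x * T + n * x ^ 2 := by
    intro x
    have h : ∀ j : Fin n, (d j - x) ^ 2 = (d j) ^ 2 - 2 * x * d j + x ^ 2 := fun j => by ring
    rw [Finset.sum_congr rfl fun j _ => h j]
    rw [Finset.sum_add_distrib, Finset.sum_sub_distrib, ← Finset.mul_sum,
      Finset.sum_const, Finset.card_univ, Fintype.card_fin, nsmul_eq_mul]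
  have hQ : Q = P - T ^ 2 / n := by
    rw [hQdef, inner (T / n)]
    field_simp
    ring
  have hB : B = (n : ℝ) * Q := by
    have h2 : 2 * B = ∑ i : Fin n, ∑ j : Fin n, (d j - d i) ^ 2 := by
      have hsym := Finset.sum_sum_Ioi_add_eq_sum_sum_off_diag
        (fun i j : Fin n => (d i - d j) ^ 2)
      have hl : ∑ i : Fin n, ∑ j ∈ Finset.Ioi i,
          ((d j - d i) ^ 2 + (d i - d j) ^ 2) = 2 * B := by
        rw [hBdef, Finset.mul_sum]
        refine Finset.sum_congr rfl fun i _ => ?_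
        rw [Finset.mul_sum]
        exact Finset.sum_congr rfl fun j _ => by ring
      rw [hl] at hsym
      rw [hsym]
      refine Finset.sum_congr rfl fun i _ =>
        Finset.sum_subset (Finset.subset_univ _) fun x _ hx => ?_
      have hxi : x = i := by simpa using hx
      simp [hxi]
    have h3 : ∑ i : Fin n, ∑ j : Fin n, (d j - d i) ^ 2
        = 2 * ((n : ℝ) * P - T ^ 2) := by
      have : ∀ i : Fin n, ∑ j : Fin n, (d j - d i) ^ 2
          = P - 2 * d i * T + n * (d i) ^ 2 := fun i => inner (d i)
      rw [Finset.sum_congr rfl fun i _ => this i]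
      rw [Finset.sum_add_distrib, Finset.sum_sub_distrib, Finset.sum_const,
        Finset.card_univ, Fintype.card_fin, nsmul_eq_mul, ← Finset.mul_sum]
      have e1 : ∑ i : Fin n, 2 * d i * T = 2 * T * T := by
        rw [show (fun i => 2 * d i * T) = fun i => (2 * T) * d i from funext fun i => by ring]
        rw [← Finset.mul_sum, ← hTdef]
      rw [e1]
      ring
    have : 2 * B = 2 * ((n : ℝ) * P - T ^ 2) := by rw [h2, h3]
    have hBval : B = (n : ℝ) * P - T ^ 2 := by linarith
    rw [hBval, hQ]
    field_simp
  have hQnn : 0 ≤ Q := Finset.sum_nonneg fun i _ => sq_nonneg _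
  have hBnn : 0 ≤ B := by rw [hB]; positivity
  -- key inequality for every t in (0,1]
  have key : ∀ t : ℝ, 0 < t → t ≤ 1 →
      (∑ i : Fin n, ∑ j ∈ Finset.Ioi i, U (u i - u j)) -
        (∑ i : Fin n, ∑ j ∈ Finset.Ioi i, U (r i - r j)) ≤
      -(μ / 2) * (1 - t) * B := by
    intro t ht0 ht1
    set s : Fin n → ℝ := fun i => (1 - t) * r i + t * u i with hs
    have hs01 : ∀ i, s i ∈ Set.Icc (0 : ℝ) 1 := by
      intro i
      obtain ⟨h1, h2⟩ := hr i
      obtain ⟨h3, h4⟩ := hu i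
      constructor
      · simp only [hs]; nlinarith
      · simp only [hs]; nlinarith
    have quad : ∀ x y : ℝ, x ∈ Set.Icc (-1 : ℝ) 1 → y ∈ Set.Icc (-1 : ℝ) 1 →
        (1 - t) * U x + t * U y + μ / 2 * (t * (1 - t)) * (y - x) ^ 2
          ≤ U ((1 - t) * x + t * y) := by
      intro x y hx hy
      have hc := hUconc.2 hx hy (by linarith : (0 : ℝ) ≤ 1 - t) ht0.le (by ring)
      simp only [smul_eq_mul] at hc
      nlinarith [hc]
    have pair : ∀ i j : Fin n,
        (1 - t) * U (r i - r j) + t * U (u i - u j)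
          + μ / 2 * (t * (1 - t)) * (d i - d j) ^ 2 ≤ U (s i - s j) := by
      intro i j
      obtain ⟨ha1, ha2⟩ := hr i
      obtain ⟨ha3, ha4⟩ := hr j
      obtain ⟨hb1, hb2⟩ := hu i
      obtain ⟨hb3, hb4⟩ := hu j
      have hx : (r i - r j) ∈ Set.Icc (-1 : ℝ) 1 := ⟨by linarith, by linarith⟩
      have hy : (u i - u j) ∈ Set.Icc (-1 : ℝ) 1 := ⟨by linarith, by linarith⟩
      have hsij : s i - s j = (1 - t) * (r i - r j) + t * (u i - u j) := by
        simp only [hs]; ring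
      rw [hsij]
      have hdij : d i - d j = (u i - u j) - (r i - r j) := by simp only [hdd]; ring
      rw [hdij]
      exact quad _ _ hx hy
    have hsum : (1 - t) * (∑ i : Fin n, ∑ j ∈ Finset.Ioi i, U (r i - r j))
        + t * (∑ i : Fin n, ∑ j ∈ Finset.Ioi i, U (u i - u j))
        + μ / 2 * (t * (1 - t)) * B
        ≤ ∑ i : Fin n, ∑ j ∈ Finset.Ioi i, U (s i - s j) := by
      have he : (1 - t) * (∑ i : Fin n, ∑ j ∈ Finset.Ioi i, U (r i - r j))
          + t * (∑ i : Fin n, ∑ j ∈ Finset.Ioi i, U (u i - u j))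
          + μ / 2 * (t * (1 - t)) * B
          = ∑ i : Fin n, ∑ j ∈ Finset.Ioi i,
            ((1 - t) * U (r i - r j) + t * U (u i - u j)
              + μ / 2 * (t * (1 - t)) * (d i - d j) ^ 2) := by
        rw [hBdef]
        simp only [Finset.mul_sum]
        rw [← Finset.sum_add_distrib, ← Finset.sum_add_distrib]
        refine Finset.sum_congr rfl fun i _ => ?_
        rw [← Finset.sum_add_distrib, ← Finset.sum_add_distrib]
      rw [he]
      exact Finset.sum_le_sum fun i _ => Finset.sum_le_sum fun j _ => pair i j
    have hopt := hropt s hs01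
    have hmul : t * ((∑ i : Fin n, ∑ j ∈ Finset.Ioi i, U (u i - u j)) -
        (∑ i : Fin n, ∑ j ∈ Finset.Ioi i, U (r i - r j)))
        ≤ t * (-(μ / 2) * (1 - t) * B) := by nlinarith [hsum, hopt]
    exact le_of_mul_le_mul_left hmul ht0
  -- pass to the limit t → 0
  have goal_eq : -((n : ℝ) * μ / 2) * Q = -(μ / 2) * B := by rw [hB]; ring
  rw [goal_eq]
  refine le_of_forall_pos_le_add fun ε hε => ?_
  set C : ℝ := μ / 2 * B with hC
  have hCnn : 0 ≤ C := by positivity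
  set t : ℝ := min 1 (ε / (C + 1)) with ht
  have ht0 : 0 < t := lt_min one_pos (div_pos hε (by linarith))
  have ht1 : t ≤ 1 := min_le_left _ _
  have hkey := key t ht0 ht1
  have htle : t ≤ ε / (C + 1) := min_le_right _ _
  have htC : t * (C + 1) ≤ ε := by
    rw [← le_div_iff₀ (by linarith : (0 : ℝ) < C + 1)]
    exact htle
  have htC' : t * C ≤ ε := by
    have hid : t * C = t * (C + 1) - t := by ring
    linarith
  have hexp : -(μ / 2) * (1 - t) * B = -C + t * C := by rw [hC]; ring
  rw [hexp] at hkey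
  linarith
end

section
/- Let n ≥ 2, let U : [−1,1] → ℝ be strongly concave with parameter μ > 0, and suppose S(r) = Σ_{1≤i<j≤n} U(r_i − r_j). Then the function r ↦ S(r) + (nμ/2)·‖Proj_{Vₙ}(r)‖² is concave on [0,1]ⁿ, where Vₙ ⊂ ℝⁿ is the subspace orthogonal to (1,1,…,1), Proj_{Vₙ} is the orthogonal projection onto Vₙ, and ‖·‖ is the Euclidean norm. -/
open Finset Set

private lemma concaveOn_finset_sum {ι E : Type*} [AddCommGroup E] [Module ℝ E]
    (t : Finset ι) {s : Set E} (hs : Convex ℝ s) {f : ι → E → ℝ}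
    (hf : ∀ i ∈ t, ConcaveOn ℝ s (f i)) :
    ConcaveOn ℝ s (fun x => ∑ i ∈ t, f i x) := by
  classical
  induction t using Finset.induction_on with
  | empty => simpa using concaveOn_const 0 hs
  | @insert a t hx ih =>
    simp only [Finset.sum_insert hx]
    exact (hf a (Finset.mem_insert_self a t)).add
      (ih fun i hi => hf i (Finset.mem_insert_of_mem hi))

private lemma pair_sum_sq {n : ℕ} (hn : 1 ≤ n) (r : Fin n → ℝ) :
    ∑ i : Fin n, ∑ j ∈ Finset.Ioi i, (r i - r j) ^ 2
      = n * ∑ i : Fin n, (r i - (∑ j : Fin n, r j) / n) ^ 2 := by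
  have hn' : (n : ℝ) ≠ 0 := by positivity
  -- Double the Ioi sum to a full sum
  have hdouble : (2:ℝ) * ∑ i : Fin n, ∑ j ∈ Finset.Ioi i, (r i - r j) ^ 2
      = ∑ i : Fin n, ∑ j : Fin n, (r i - r j) ^ 2 := by
    have hsplit : ∀ i : Fin n, (Finset.univ : Finset (Fin n))
        = Finset.Iio i ∪ {i} ∪ Finset.Ioi i := by
      intro i
      ext j
      simp only [Finset.mem_univ, Finset.mem_union, Finset.mem_Iio,
        Finset.mem_singleton, Finset.mem_Ioi, true_iff]
      rcases lt_trichotomy j i with h | h | h <;> tauto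
    have h1 : ∑ i : Fin n, ∑ j : Fin n, (r i - r j) ^ 2
        = ∑ i : Fin n, (∑ j ∈ Finset.Iio i, (r i - r j) ^ 2
            + ∑ j ∈ Finset.Ioi i, (r i - r j) ^ 2) := by
      refine Finset.sum_congr rfl fun i _ => ?_
      rw [hsplit i, Finset.sum_union, Finset.sum_union]
      · simp
      · simp
      · rw [Finset.disjoint_left]
        intro a ha hb
        simp only [Finset.mem_union, Finset.mem_Iio, Finset.mem_singleton] at ha
        simp only [Finset.mem_Ioi] at hb
        rcases ha with h | h
        · exact absurd (h.trans hb) (lt_irrefl a)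
        · exact absurd hb (by simp [h])
    have h2 : ∑ i : Fin n, ∑ j ∈ Finset.Iio i, (r i - r j) ^ 2
        = ∑ i : Fin n, ∑ j ∈ Finset.Ioi i, (r i - r j) ^ 2 := by
      rw [Finset.sum_sigma', Finset.sum_sigma']
      apply Finset.sum_nbij' (fun p => ⟨p.2, p.1⟩) (fun p => ⟨p.2, p.1⟩) <;>
        simp [Finset.mem_sigma] <;> intros <;> ring
    rw [h1, Finset.sum_add_distrib, h2]; ring
  have hfull : ∑ i : Fin n, ∑ j : Fin n, (r i - r j) ^ 2
      = 2 * n * (∑ i : Fin n, (r i)^2) - 2 * (∑ i : Fin n, r i)^2 := by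
    have : ∀ i j : Fin n, (r i - r j)^2 = (r i)^2 + (r j)^2 - 2 * (r i * r j) := by
      intros; ring
    simp only [this, Finset.sum_sub_distrib, Finset.sum_add_distrib,
      Finset.sum_const, ← Finset.mul_sum, ← Finset.sum_mul, Finset.card_univ,
      Fintype.card_fin, nsmul_eq_mul]
    ring
  have hrhs : ∑ i : Fin n, (r i - (∑ j : Fin n, r j) / n) ^ 2
      = (∑ i : Fin n, (r i)^2) - (∑ i : Fin n, r i)^2 / n := by
    have : ∀ i : Fin n, (r i - (∑ j : Fin n, r j) / n)^2
        = (r i)^2 - 2 * (r i * ((∑ j : Fin n, r j) / n))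
          + ((∑ j : Fin n, r j) / n)^2 := by intros; ring
    simp only [this, Finset.sum_add_distrib, Finset.sum_sub_distrib,
      Finset.sum_const, ← Finset.mul_sum, ← Finset.sum_mul, Finset.card_univ,
      Fintype.card_fin, nsmul_eq_mul]
    field_simp
    ring
  have := hdouble
  rw [hfull] at this
  rw [hrhs]
  field_simp at this ⊢
  linarith

/-- If `U` is `μ`-strongly concave on `[-1,1]`, then
`r ↦ S(r) + (nμ/2)‖Proj_{Vₙ}(r)‖²` is concave on `[0,1]^n`, where the squared
norm of the projection onto the orthogonal complement of `(1,…,1)` is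
`∑ i (r_i - mean(r))²`. -/
theorem stmt5 (n : ℕ) (hn : 2 ≤ n) (U : ℝ → ℝ) (μ : ℝ) (hμ : 0 < μ)
    (hUconc : ConcaveOn ℝ (Set.Icc (-1 : ℝ) 1) (fun x => U x + μ / 2 * x ^ 2)) :
    ConcaveOn ℝ {r : Fin n → ℝ | ∀ i, r i ∈ Set.Icc (0 : ℝ) 1}
      (fun r : Fin n → ℝ =>
        (∑ i : Fin n, ∑ j ∈ Finset.Ioi i, U (r i - r j)) +
          n * μ / 2 * ∑ i : Fin n, (r i - (∑ j : Fin n, r j) / n) ^ 2) := by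
  set s : Set (Fin n → ℝ) := {r : Fin n → ℝ | ∀ i, r i ∈ Set.Icc (0 : ℝ) 1}
  have hs : Convex ℝ s := by
    have : s = Set.pi Set.univ (fun _ : Fin n => Set.Icc (0:ℝ) 1) := by
      ext r
      simp only [s, Set.mem_setOf_eq, Set.mem_pi, Set.mem_univ, forall_true_left,
        forall_const]
    rw [this]
    exact convex_pi fun i _ => convex_Icc 0 1
  have hfun : (fun r : Fin n → ℝ =>
        (∑ i : Fin n, ∑ j ∈ Finset.Ioi i, U (r i - r j)) +
          n * μ / 2 * ∑ i : Fin n, (r i - (∑ j : Fin n, r j) / n) ^ 2)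
      = fun r : Fin n → ℝ =>
        ∑ i : Fin n, ∑ j ∈ Finset.Ioi i,
          (U (r i - r j) + μ / 2 * (r i - r j) ^ 2) := by
    funext r
    simp only [Finset.sum_add_distrib, ← Finset.mul_sum]
    rw [pair_sum_sq (by omega : 1 ≤ n) r]
    ring
  rw [hfun]
  refine concaveOn_finset_sum _ hs fun i _ => concaveOn_finset_sum _ hs fun j hj => ?_
  -- each term: V ∘ affine map
  have hij : i ≠ j := (Finset.mem_Ioi.mp hj).ne
  let A : (Fin n → ℝ) →ᵃ[ℝ] ℝ :=
    ((LinearMap.proj i : (Fin n → ℝ) →ₗ[ℝ] ℝ) - LinearMap.proj j).toAffineMap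
  have hcomp := hUconc.comp_affineMap A
  have hsub : s ⊆ A ⁻¹' (Set.Icc (-1 : ℝ) 1) := by
    intro r hr
    have h1 := hr i
    have h2 := hr j
    simp only [Set.mem_Icc] at h1 h2
    simp only [Set.mem_preimage, Set.mem_Icc, A, LinearMap.coe_toAffineMap,
      LinearMap.sub_apply, LinearMap.proj_apply]
    constructor <;> linarith
  have hres := hcomp.subset hsub hs
  exact hres
end

section
/- Let U : [−1,1] → ℝ be strictly increasing, concave, and differentiable on [0,1], with U'(0) < ∞ and U'(1) > 0, and set κ = U'(0)/U'(1). Let r̂ ∈ [0,1]ⁿ with r̂₁ ≥ ⋯ ≥ r̂ₙ maximize S(r₁,…,rₙ) = Σ_{1≤i<j≤n} U(r_i − r_j) over [0,1]ⁿ. Then r̂_k = 1 for every integer k with 1 ≤ k ≤ n/(κ+1); in particular the empirical measure P̂ₙ = (1/n)Σ_{i=1}^n δ_{r̂_i} satisfies P̂ₙ({1}) ≥ ⌊n/(κ+1)⌋/n. -/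
/-!
Suppose `r k < 1` with `(k + 1)(κ + 1) ≤ n`, let `m ≤ k` be the first index with `r m < 1`, and
lift the block `r m, …, r k` by `ε = 1 - r m`; this keeps `r` in `[0,1]ⁿ`. Only pairs with
exactly one index in the block change. By concavity each pair (block index, index `> k`) gains at
least `ε U'(1)`, and each pair (index `< m`, block index), whose earlier entry is `1`, loses at
most `ε U'(0)`. Per block index there are `n - 1 - k` gains and `m` losses, and
`m U'(0) ≤ k U'(0) < (n - 1 - k) U'(1)`, so the lift strictly increases `S`, contradicting
maximality.
-/

open MeasureTheory Set Finset

namespace ConcaveOn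

variable {f f' : ℝ → ℝ} {p q a ε : ℝ}

theorem antitoneOn_of_hasDerivWithinAt {S : Set ℝ} (hf : ConcaveOn ℝ S f)
    (hf' : ∀ x ∈ S, HasDerivWithinAt f (f' x) S x) : AntitoneOn f' S := by
  intro x hx y hy hxy
  rcases hxy.eq_or_lt with rfl | hlt
  · rfl
  exact (hf.le_slope_of_hasDerivWithinAt hx hy hlt (hf' y hy)).trans
    (hf.slope_le_of_hasDerivWithinAt hx hy hlt (hf' x hx))

theorem mul_deriv_right_le_sub (hf : ConcaveOn ℝ (Icc p q) f)
    (hf' : ∀ x ∈ Icc p q, HasDerivWithinAt f (f' x) (Icc p q) x)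
    (ha : p ≤ a) (hε : 0 < ε) (hq : a + ε ≤ q) : ε * f' q ≤ f (a + ε) - f a := by
  have hb : a + ε ∈ Icc p q := ⟨by linarith, hq⟩
  have hslope := hf.le_slope_of_hasDerivWithinAt ⟨ha, by linarith⟩ hb (by linarith)
    (hf' _ hb)
  have hderiv := hf.antitoneOn_of_hasDerivWithinAt hf' hb ⟨hb.1.trans hq, le_rfl⟩ hq
  rw [slope_def_field, add_sub_cancel_left, le_div_iff₀ hε] at hslope
  nlinarith

theorem sub_le_mul_deriv_left (hf : ConcaveOn ℝ (Icc p q) f)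
    (hf' : ∀ x ∈ Icc p q, HasDerivWithinAt f (f' x) (Icc p q) x)
    (ha : p ≤ a) (hε : 0 < ε) (hq : a + ε ≤ q) : f (a + ε) - f a ≤ ε * f' p := by
  have ha' : a ∈ Icc p q := ⟨ha, by linarith⟩
  have hslope := hf.slope_le_of_hasDerivWithinAt ha' ⟨by linarith, hq⟩ (by linarith)
    (hf' _ ha')
  have hderiv := hf.antitoneOn_of_hasDerivWithinAt hf' ⟨le_rfl, ha.trans ha'.2⟩ ha' ha
  rw [slope_def_field, add_sub_cancel_left, div_le_iff₀ hε] at hslope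
  nlinarith

end ConcaveOn

theorem sum_sum_Ioi_ite_mem_and_mem {α M : Type*} [Fintype α] [LinearOrder α]
    [LocallyFiniteOrderTop α] [AddCommMonoid M] {X Y : Finset α}
    (hXY : ∀ x ∈ X, ∀ y ∈ Y, x < y) (c : M) :
    ∑ i, ∑ j ∈ Ioi i, (if i ∈ X ∧ j ∈ Y then c else 0) = (#X * #Y) • c := by
  have hinner : ∀ i ∈ X, ∑ j ∈ Ioi i, (if j ∈ Y then c else 0) = #Y • c := by
    intro i hi
    rw [sum_ite_mem, inter_eq_right.mpr fun j hj => mem_Ioi.mpr (hXY i hi j hj), sum_const]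
  simp_rw [ite_and, sum_ite_irrel, sum_const_zero]
  rw [sum_ite_mem, Finset.univ_inter, sum_congr rfl hinner, sum_const, mul_smul]

def pairUtility (U : ℝ → ℝ) {n : ℕ} (r : Fin n → ℝ) : ℝ :=
  ∑ i, ∑ j ∈ Ioi i, U (r i - r j)

def liftBlock {n : ℕ} (r : Fin n → ℝ) (m k : Fin n) : Fin n → ℝ :=
  fun i => if i ∈ Finset.Icc m k then r i + (1 - r m) else r i

section liftBlock

variable {n : ℕ} {U U' : ℝ → ℝ} {r : Fin n → ℝ} {m k : Fin n}

theorem liftBlock_mem_Icc (hr : ∀ i, r i ∈ Icc (0 : ℝ) 1) (hanti : Antitone r) (i : Fin n) :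
    liftBlock r m k i ∈ Icc (0 : ℝ) 1 := by
  unfold liftBlock
  split_ifs with hi
  · have := hanti (Finset.mem_Icc.mp hi).1
    constructor <;> linarith [(hr i).1, (hr m).2]
  · exact hr i

theorem liftBlock_pair_bound (hUconc : ConcaveOn ℝ (Icc 0 1) U)
    (hderiv : ∀ x ∈ Icc (0 : ℝ) 1, HasDerivWithinAt U (U' x) (Icc 0 1) x)
    (hr : ∀ i, r i ∈ Icc (0 : ℝ) 1) (hanti : Antitone r) (hbefore : ∀ i < m, r i = 1)
    (hrm : r m < 1) {i j : Fin n} (hij : i < j) :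
    (if i ∈ Finset.Icc m k ∧ j ∈ Finset.Ioi k then (1 - r m) * U' 1 else 0) -
        (if i ∈ Finset.Iio m ∧ j ∈ Finset.Icc m k then (1 - r m) * U' 0 else 0) ≤
      U (liftBlock r m k i - liftBlock r m k j) - U (r i - r j) := by
  have hε : 0 < 1 - r m := by linarith
  by_cases hi : i ∈ Finset.Icc m k <;> by_cases hj : j ∈ Finset.Icc m k
  · simp [liftBlock, hi, hj, (Finset.mem_Icc.mp hj).2.not_gt, (Finset.mem_Icc.mp hi).1.not_gt]
  · have hjk : k < j := by
      by_contra! h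
      exact hj (Finset.mem_Icc.mpr ⟨(Finset.mem_Icc.mp hi).1.trans hij.le, h⟩)
    have hgain := hUconc.mul_deriv_right_le_sub hderiv (a := r i - r j)
      (sub_nonneg.mpr (hanti hij.le)) hε
      (by linarith [hanti (Finset.mem_Icc.mp hi).1, (hr j).1])
    simp only [liftBlock, hi, hj, Finset.mem_Ioi.mpr hjk, Finset.mem_Iio,
      (Finset.mem_Icc.mp hi).1.not_gt]
    simp only [and_self, if_true, if_false, sub_zero]
    rw [show r i + (1 - r m) - r j = r i - r j + (1 - r m) by ring]
    linarith
  · have him : i < m := by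
      by_contra! h
      exact hi (Finset.mem_Icc.mpr ⟨h, hij.le.trans (Finset.mem_Icc.mp hj).2⟩)
    have hloss := hUconc.sub_le_mul_deriv_left hderiv (a := 1 - r j - (1 - r m))
      (by linarith [hanti (Finset.mem_Icc.mp hj).1]) hε (by linarith [(hr j).1])
    simp only [liftBlock, hi, hj, Finset.mem_Iio.mpr him, (Finset.mem_Icc.mp hj).2.not_gt,
      Finset.mem_Ioi]
    simp only [and_self, if_true, if_false, zero_sub, hbefore i him]
    rw [sub_add_cancel] at hloss
    rw [show 1 - (r j + (1 - r m)) = 1 - r j - (1 - r m) by ring]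
    linarith
  · simp [liftBlock, hi, hj]

theorem pairUtility_lt_liftBlock (hUconc : ConcaveOn ℝ (Icc 0 1) U)
    (hderiv : ∀ x ∈ Icc (0 : ℝ) 1, HasDerivWithinAt U (U' x) (Icc 0 1) x)
    (hr : ∀ i, r i ∈ Icc (0 : ℝ) 1) (hanti : Antitone r) (hbefore : ∀ i < m, r i = 1)
    (hrm : r m < 1) (hmk : m ≤ k) (hcount : (m : ℝ) * U' 0 < ((n : ℝ) - 1 - k) * U' 1) :
    pairUtility U r < pairUtility U (liftBlock r m k) := by
  have hbound := sum_le_sum fun i (_ : i ∈ Finset.univ) =>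
    sum_le_sum fun j (hj : j ∈ Finset.Ioi i) =>
      liftBlock_pair_bound (k := k) hUconc hderiv hr hanti hbefore hrm (Finset.mem_Ioi.mp hj)
  have hgain := sum_sum_Ioi_ite_mem_and_mem (X := Finset.Icc m k) (Y := Finset.Ioi k)
    (fun i hi j hj => (Finset.mem_Icc.mp hi).2.trans_lt (Finset.mem_Ioi.mp hj))
    ((1 - r m) * U' 1)
  have hloss := sum_sum_Ioi_ite_mem_and_mem (X := Finset.Iio m) (Y := Finset.Icc m k)
    (fun i hi j hj => (Finset.mem_Iio.mp hi).trans_le (Finset.mem_Icc.mp hj).1)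
    ((1 - r m) * U' 0)
  simp only [sum_sub_distrib, hgain, hloss, nsmul_eq_mul, Nat.cast_mul] at hbound
  have hA : (0 : ℝ) < #(Finset.Icc m k) := by
    exact_mod_cast card_pos.mpr (nonempty_Icc.mpr hmk)
  have hG : (#(Finset.Ioi k) : ℝ) = n - 1 - k := by
    rw [Fin.card_Ioi, Nat.sub_sub, Nat.cast_sub (by omega), Nat.cast_add, Nat.cast_one]
    ring
  rw [hG, Fin.card_Iio] at hbound
  have hpos := mul_pos (mul_pos hA (sub_pos.mpr hrm)) (sub_pos.mpr hcount)
  unfold pairUtility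
  linarith

theorem eq_one_of_succ_le_div (hUconc : ConcaveOn ℝ (Icc 0 1) U)
    (hderiv : ∀ x ∈ Icc (0 : ℝ) 1, HasDerivWithinAt U (U' x) (Icc 0 1) x) (hU'1 : 0 < U' 1)
    (hr : ∀ i, r i ∈ Icc (0 : ℝ) 1) (hanti : Antitone r)
    (hropt : ∀ s : Fin n → ℝ, (∀ i, s i ∈ Icc (0 : ℝ) 1) →
      pairUtility U s ≤ pairUtility U r)
    (hk : ((k : ℕ) + 1 : ℝ) ≤ n / (U' 0 / U' 1 + 1)) : r k = 1 := by
  by_contra hk1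
  obtain ⟨m, hm, hmin⟩ := (univ.filter fun i => r i < 1).exists_min_image id
    ⟨k, mem_filter.mpr ⟨mem_univ k, (hr k).2.lt_of_ne hk1⟩⟩
  simp only [mem_filter, Finset.mem_univ, true_and, id] at hm hmin
  have hbefore : ∀ i < m, r i = 1 := fun i hi =>
    (hr i).2.antisymm (not_lt.mp fun h => (hmin i h).not_gt hi)
  have hmk : (m : ℝ) ≤ k := by exact_mod_cast hmin k ((hr k).2.lt_of_ne hk1)
  have hU'01 : U' 1 ≤ U' 0 := hUconc.antitoneOn_of_hasDerivWithinAt hderiv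
    ⟨le_rfl, zero_le_one⟩ ⟨zero_le_one, le_rfl⟩ zero_le_one
  rw [div_add_one hU'1.ne', div_div_eq_mul_div, le_div_iff₀ (by linarith)] at hk
  have hcount : (m : ℝ) * U' 0 < ((n : ℝ) - 1 - k) * U' 1 := by nlinarith
  exact (pairUtility_lt_liftBlock hUconc hderiv hr hanti hbefore hm (by exact_mod_cast hmk)
    hcount).not_ge (hropt _ (liftBlock_mem_Icc hr hanti))

end liftBlock

theorem natCast_div_le_empirical_apply {n F : ℕ} (r : Fin n → ℝ) (a : ℝ) (hF : F ≤ n)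
    (h : ∀ i : Fin n, (i : ℕ) < F → r i = a) :
    (F : ENNReal) / n ≤ ((n : ENNReal)⁻¹ • ∑ i, Measure.dirac (r i)) {a} := by
  have hcount : (F : ENNReal) ≤ ∑ i, Measure.dirac (r i) {a} :=
    calc (F : ENNReal) = ∑ i ∈ univ.filter fun i : Fin n => (i : ℕ) < F, 1 := by
          rw [sum_const, Fin.card_filter_val_lt, min_eq_right hF, nsmul_one]
      _ = ∑ i ∈ univ.filter fun i : Fin n => (i : ℕ) < F, Measure.dirac (r i) {a} :=
          sum_congr rfl fun i hi => by
            rw [h i (mem_filter.mp hi).2, Measure.dirac_apply_of_mem (Set.mem_singleton a)]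
      _ ≤ ∑ i, Measure.dirac (r i) {a} := sum_le_sum_of_subset (filter_subset _ _)
  rw [Measure.smul_apply, Measure.finsetSum_apply, smul_eq_mul, div_eq_mul_inv, mul_comm]
  gcongr

theorem stmt12_general (n : ℕ) (U U' : ℝ → ℝ)
    (hUconc : ConcaveOn ℝ (Set.Icc (-1 : ℝ) 1) U)
    (hderiv : ∀ x ∈ Set.Icc (0 : ℝ) 1, HasDerivWithinAt U (U' x) (Set.Icc (0 : ℝ) 1) x)
    (hU'1 : 0 < U' 1)
    (r : Fin n → ℝ) (hr : ∀ i, r i ∈ Set.Icc (0 : ℝ) 1)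
    (hrmono : ∀ i j : Fin n, i ≤ j → r j ≤ r i)
    (hropt : ∀ s : Fin n → ℝ, (∀ i, s i ∈ Set.Icc (0 : ℝ) 1) →
      (∑ i : Fin n, ∑ j ∈ Finset.Ioi i, U (s i - s j)) ≤
        ∑ i : Fin n, ∑ j ∈ Finset.Ioi i, U (r i - r j)) :
    (∀ k : Fin n, ((k : ℕ) + 1 : ℝ) ≤ n / (U' 0 / U' 1 + 1) → r k = 1) ∧
      ENNReal.ofReal ((⌊(n : ℝ) / (U' 0 / U' 1 + 1)⌋ : ℝ) / n) ≤
        ((n : ENNReal)⁻¹ • ∑ i : Fin n, Measure.dirac (r i)) {1} := by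
  have hUconc₀ : ConcaveOn ℝ (Icc 0 1) U :=
    hUconc.subset (Icc_subset_Icc (by norm_num) le_rfl) (convex_Icc 0 1)
  have hone : ∀ k : Fin n, ((k : ℕ) + 1 : ℝ) ≤ n / (U' 0 / U' 1 + 1) → r k = 1 :=
    fun k => eq_one_of_succ_le_div hUconc₀ hderiv hU'1 hr hrmono hropt
  refine ⟨hone, ?_⟩
  have hκ : 1 ≤ U' 0 / U' 1 + 1 := by
    have := hUconc₀.antitoneOn_of_hasDerivWithinAt hderiv
      ⟨le_rfl, zero_le_one⟩ ⟨zero_le_one, le_rfl⟩ zero_le_one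
    linarith [div_nonneg (hU'1.le.trans this) hU'1.le]
  set x := (n : ℝ) / (U' 0 / U' 1 + 1)
  have hx0 : 0 ≤ x := div_nonneg n.cast_nonneg (zero_le_one.trans hκ)
  rw [← Int.natCast_floor_eq_floor hx0, Int.cast_natCast]
  refine (ENNReal.ofReal_div_le n.cast_nonneg).trans ?_
  rw [ENNReal.ofReal_natCast, ENNReal.ofReal_natCast]
  refine natCast_div_le_empirical_apply r 1
    (Nat.floor_le_of_le (div_le_self n.cast_nonneg hκ)) fun i hi => hone i ?_
  exact le_trans (by exact_mod_cast hi) (Nat.floor_le hx0)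

/-- If `U` is strictly increasing, concave and differentiable on `[0,1]`
with derivative `U'` satisfying `U'(1) > 0`, `κ = U'(0)/U'(1)`, and the nonincreasing
`r ∈ [0,1]^n` maximizes `S`, then `r_k = 1` for every `1 ≤ k ≤ n/(κ+1)`; in particular
the empirical measure puts mass at least `⌊n/(κ+1)⌋/n` on `{1}`. -/
theorem stmt12 (n : ℕ) (hn : 2 ≤ n) (U U' : ℝ → ℝ)
    (hUmono : StrictMonoOn U (Set.Icc (-1 : ℝ) 1))
    (hUconc : ConcaveOn ℝ (Set.Icc (-1 : ℝ) 1) U)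
    (hderiv : ∀ x ∈ Set.Icc (0 : ℝ) 1, HasDerivWithinAt U (U' x) (Set.Icc (0 : ℝ) 1) x)
    (hU'1 : 0 < U' 1)
    (r : Fin n → ℝ) (hr : ∀ i, r i ∈ Set.Icc (0 : ℝ) 1)
    (hrmono : ∀ i j : Fin n, i ≤ j → r j ≤ r i)
    (hropt : ∀ s : Fin n → ℝ, (∀ i, s i ∈ Set.Icc (0 : ℝ) 1) →
      (∑ i : Fin n, ∑ j ∈ Finset.Ioi i, U (s i - s j)) ≤
        ∑ i : Fin n, ∑ j ∈ Finset.Ioi i, U (r i - r j)) :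
    (∀ k : Fin n, ((k : ℕ) + 1 : ℝ) ≤ n / (U' 0 / U' 1 + 1) → r k = 1) ∧
      ENNReal.ofReal ((⌊(n : ℝ) / (U' 0 / U' 1 + 1)⌋ : ℝ) / n) ≤
        ((n : ENNReal)⁻¹ • ∑ i : Fin n, Measure.dirac (r i)) {1} :=
  stmt12_general n U U' hUconc hderiv hU'1 r hr hrmono hropt
end

section
/- Let 0 < γ < 1 and let μ be a finite signed Borel measure on [0,1] with μ([0,1]) = 0. Define I(μ) = ∫∫_{[0,1]²} |x−y|^γ dμ(x) dμ(y). Then I(μ) ≤ 0, and I(μ) = 0 if and only if μ(E) = 0 for every Borel set E ⊆ [0,1]. -/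
/-!
For `0 < γ ≤ 1` one has `|u| ^ γ = c⁻¹ * ∫ ξ, (1 - cos (ξ * u)) * |ξ| ^ (-1 - γ)` with
`c = ∫ t, (1 - cos t) * |t| ^ (-1 - γ) > 0` (substitute `t = ξ * u`). Integrating against
`μ ⊗ μ` and exchanging the integrals, the constant `1` drops out because `μ` has total mass
zero, while `cos (ξ * (x - y))` integrates to `|μ̂ ξ| ^ 2`. Hence
`I(μ) = -c⁻¹ * ∫ ξ, |μ̂ ξ| ^ 2 * |ξ| ^ (-1 - γ) ≤ 0`. If `I(μ) = 0`, the continuous function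
`μ̂` vanishes almost everywhere, hence everywhere, and `μ = 0` by injectivity of the
characteristic function.
-/

open MeasureTheory Set Real ComplexConjugate

/-- For `|t| ≤ 1` use `1 - cos t ≤ t ^ 2 / 2` (here `γ ≤ 1` enters), else `1 - cos t ≤ 2`. -/
lemma one_sub_cos_mul_abs_rpow_le {γ : ℝ} (hγ : 0 ≤ γ) (hγ1 : γ ≤ 1) (t : ℝ) :
    (1 - cos t) * |t| ^ (-1 - γ) ≤ 8 * (1 + |t|) ^ (-(1 + γ)) := by
  have h2 : (1 / 4 : ℝ) ≤ 2 ^ (-(1 + γ)) := by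
    calc (1 / 4 : ℝ) = 2 ^ (-2 : ℝ) := by norm_num
      _ ≤ 2 ^ (-(1 + γ)) := by gcongr <;> linarith
  rcases eq_or_ne t 0 with rfl | ht
  · simp
  have hpos : 0 < |t| := abs_pos.2 ht
  rcases le_total |t| 1 with hle | hge
  · calc (1 - cos t) * |t| ^ (-1 - γ) ≤ |t| ^ (2 : ℝ) / 2 * |t| ^ (-1 - γ) := by
          gcongr
          rw [rpow_two, sq_abs]
          linarith [one_sub_sq_div_two_le_cos (x := t)]
      _ = |t| ^ (1 - γ) / 2 := by
          rw [div_mul_eq_mul_div, ← rpow_add hpos]; ring_nf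
      _ ≤ 1 / 2 := by gcongr; exact rpow_le_one hpos.le hle (by linarith)
      _ ≤ 8 * 2 ^ (-(1 + γ)) := by linarith
      _ ≤ 8 * (1 + |t|) ^ (-(1 + γ)) := by
          gcongr 8 * ?_
          exact rpow_le_rpow_of_nonpos (by positivity) (by linarith) (by linarith)
  · calc (1 - cos t) * |t| ^ (-1 - γ) ≤ 2 * |t| ^ (-(1 + γ)) := by
          rw [show -1 - γ = -(1 + γ) by ring]
          gcongr
          linarith [neg_one_le_cos t]
      _ ≤ 8 * 2 ^ (-(1 + γ)) * |t| ^ (-(1 + γ)) := by gcongr; linarith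
      _ = 8 * (2 * |t|) ^ (-(1 + γ)) := by rw [mul_rpow (by norm_num) hpos.le]; ring
      _ ≤ 8 * (1 + |t|) ^ (-(1 + γ)) := by
          gcongr 8 * ?_
          exact rpow_le_rpow_of_nonpos (by positivity) (by linarith) (by linarith)

lemma integrable_one_sub_cos_mul_abs_rpow {γ : ℝ} (hγ : 0 < γ) (hγ1 : γ ≤ 1) :
    Integrable fun t : ℝ => (1 - cos t) * |t| ^ (-1 - γ) := by
  refine ((integrable_one_add_norm (E := ℝ) (μ := volume) (r := 1 + γ) ?_).const_mul 8).mono'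
    (by fun_prop) (ae_of_all _ fun t => ?_)
  · simp; linarith
  · rw [norm_of_nonneg (mul_nonneg (by linarith [cos_le_one t]) (by positivity))]
    exact one_sub_cos_mul_abs_rpow_le hγ.le hγ1 t

noncomputable def cosKernelConst (γ : ℝ) : ℝ := ∫ t, (1 - cos t) * |t| ^ (-1 - γ)

lemma cosKernelConst_pos {γ : ℝ} (hγ : 0 < γ) (hγ1 : γ ≤ 1) : 0 < cosKernelConst γ := by
  have hnonneg : 0 ≤ fun t : ℝ => (1 - cos t) * |t| ^ (-1 - γ) := fun t =>
    mul_nonneg (by linarith [cos_le_one t]) (by positivity)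
  rw [cosKernelConst, integral_pos_iff_support_of_nonneg hnonneg
    (integrable_one_sub_cos_mul_abs_rpow hγ hγ1)]
  have hsupp : Ioo 0 π ⊆ Function.support fun t : ℝ => (1 - cos t) * |t| ^ (-1 - γ) := by
    intro t ht
    have := cos_lt_cos_of_nonneg_of_le_pi le_rfl ht.2.le ht.1
    rw [cos_zero] at this
    exact (mul_pos (by linarith) (rpow_pos_of_pos (abs_pos.2 ht.1.ne') _)).ne'
  exact (by simpa using pi_pos : 0 < volume (Ioo 0 π)).trans_le (measure_mono hsupp)

lemma one_sub_cos_mul_abs_rpow_comp_mul {γ u : ℝ} (hu : u ≠ 0) (ξ : ℝ) :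
    (1 - cos (ξ * u)) * |ξ| ^ (-1 - γ)
      = |u| ^ (1 + γ) * ((1 - cos (u * ξ)) * |u * ξ| ^ (-1 - γ)) := by
  rw [abs_mul, mul_rpow (abs_nonneg u) (abs_nonneg ξ), mul_comm u ξ]
  have : |u| ^ (1 + γ) * |u| ^ (-1 - γ) = 1 := by
    rw [← rpow_add (abs_pos.2 hu)]; simp
  linear_combination ((1 - cos (ξ * u)) * |ξ| ^ (-1 - γ)) * this.symm

lemma integrable_one_sub_cos_mul_mul_abs_rpow {γ : ℝ} (hγ : 0 < γ) (hγ1 : γ ≤ 1) (u : ℝ) :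
    Integrable fun ξ : ℝ => (1 - cos (ξ * u)) * |ξ| ^ (-1 - γ) := by
  rcases eq_or_ne u 0 with rfl | hu
  · simp
  simp_rw [one_sub_cos_mul_abs_rpow_comp_mul hu]
  exact ((integrable_one_sub_cos_mul_abs_rpow hγ hγ1).comp_mul_left' hu).const_mul _

lemma integral_one_sub_cos_mul_mul_abs_rpow {γ : ℝ} (hγ : 0 < γ) (u : ℝ) :
    ∫ ξ : ℝ, (1 - cos (ξ * u)) * |ξ| ^ (-1 - γ) = cosKernelConst γ * |u| ^ γ := by
  rcases eq_or_ne u 0 with rfl | hu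
  · simp [zero_rpow hγ.ne']
  simp_rw [one_sub_cos_mul_abs_rpow_comp_mul hu]
  rw [integral_const_mul, Measure.integral_comp_mul_left
    (fun t => (1 - cos t) * |t| ^ (-1 - γ)), ← cosKernelConst, smul_eq_mul, abs_inv,
    ← rpow_neg_one, ← mul_assoc, ← rpow_add (abs_pos.2 hu)]
  ring_nf

section Subordination

variable {γ : ℝ} {X : Type*} [MeasurableSpace X] {u : X → ℝ}

lemma integrable_uncurry_one_sub_cos_mul_abs_rpow (hγ : 0 < γ) (hγ1 : γ ≤ 1) {ρ : Measure X}
    [SFinite ρ] (hu : Measurable u) (hint : Integrable (fun x => |u x| ^ γ) ρ) :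
    Integrable (Function.uncurry fun x (ξ : ℝ) => (1 - cos (ξ * u x)) * |ξ| ^ (-1 - γ))
      (ρ.prod volume) := by
  refine (integrable_prod_iff (by fun_prop)).2
    ⟨ae_of_all _ fun x => integrable_one_sub_cos_mul_mul_abs_rpow hγ hγ1 (u x), ?_⟩
  refine (hint.const_mul (cosKernelConst γ)).congr (ae_of_all _ fun x => ?_)
  simp only [Function.uncurry_apply_pair]
  rw [← integral_one_sub_cos_mul_mul_abs_rpow hγ]
  refine integral_congr_ae (ae_of_all _ fun ξ => (norm_of_nonneg ?_).symm)
  exact mul_nonneg (by linarith [cos_le_one (ξ * u x)]) (by positivity)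

lemma integral_abs_rpow_eq (hγ : 0 < γ) (hγ1 : γ ≤ 1) {ρ : Measure X} [SFinite ρ]
    (hu : Measurable u) (hint : Integrable (fun x => |u x| ^ γ) ρ) :
    ∫ x, |u x| ^ γ ∂ρ = (cosKernelConst γ)⁻¹ *
      ∫ ξ, (∫ x, (1 - cos (ξ * u x)) ∂ρ) * |ξ| ^ (-1 - γ) := by
  have hK := (cosKernelConst_pos hγ hγ1).ne'
  calc ∫ x, |u x| ^ γ ∂ρ
      = (cosKernelConst γ)⁻¹ * ∫ x, (∫ ξ, (1 - cos (ξ * u x)) * |ξ| ^ (-1 - γ)) ∂ρ := by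
        simp_rw [integral_one_sub_cos_mul_mul_abs_rpow hγ, integral_const_mul,
          inv_mul_cancel_left₀ hK]
    _ = _ := by
        rw [integral_integral_swap (integrable_uncurry_one_sub_cos_mul_abs_rpow hγ hγ1 hu hint)]
        simp_rw [integral_mul_const]

lemma integrable_integral_one_sub_cos_mul_abs_rpow (hγ : 0 < γ) (hγ1 : γ ≤ 1) {ρ : Measure X}
    [SFinite ρ] (hu : Measurable u) (hint : Integrable (fun x => |u x| ^ γ) ρ) :
    Integrable fun ξ : ℝ => (∫ x, (1 - cos (ξ * u x)) ∂ρ) * |ξ| ^ (-1 - γ) := by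
  simpa only [Function.uncurry_apply_pair, integral_mul_const] using
    (integrable_uncurry_one_sub_cos_mul_abs_rpow hγ hγ1 hu hint).integral_prod_right

lemma integral_one_sub_cos_mul (ρ : Measure X) [IsFiniteMeasure ρ] (hu : Measurable u) (ξ : ℝ) :
    ∫ x, (1 - cos (ξ * u x)) ∂ρ = ρ.real univ - ∫ x, cos (ξ * u x) ∂ρ := by
  rw [integral_sub (integrable_const 1), integral_const, smul_eq_mul, mul_one]
  exact Integrable.of_bound (by fun_prop) 1 (ae_of_all _ fun x => by simpa using abs_cos_le_one _)

variable {P M : Measure X} [IsFiniteMeasure P] [IsFiniteMeasure M]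

lemma integral_one_sub_cos_sub_integral_one_sub_cos (hu : Measurable u)
    (hmass : P univ = M univ) (ξ : ℝ) :
    (∫ x, (1 - cos (ξ * u x)) ∂P) * |ξ| ^ (-1 - γ)
      - (∫ x, (1 - cos (ξ * u x)) ∂M) * |ξ| ^ (-1 - γ)
      = -((∫ x, cos (ξ * u x) ∂P - ∫ x, cos (ξ * u x) ∂M) * |ξ| ^ (-1 - γ)) := by
  rw [integral_one_sub_cos_mul P hu, integral_one_sub_cos_mul M hu, measureReal_def,
    measureReal_def, hmass]
  ring

lemma integrable_integral_cos_sub_mul_abs_rpow (hγ : 0 < γ) (hγ1 : γ ≤ 1) (hu : Measurable u)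
    (hP : Integrable (fun x => |u x| ^ γ) P) (hM : Integrable (fun x => |u x| ^ γ) M)
    (hmass : P univ = M univ) :
    Integrable fun ξ : ℝ =>
      (∫ x, cos (ξ * u x) ∂P - ∫ x, cos (ξ * u x) ∂M) * |ξ| ^ (-1 - γ) := by
  refine ((integrable_integral_one_sub_cos_mul_abs_rpow hγ hγ1 hu hP).sub
    (integrable_integral_one_sub_cos_mul_abs_rpow hγ hγ1 hu hM)).neg.congr
    (ae_of_all _ fun ξ => ?_)
  simp only [Pi.neg_apply, Pi.sub_apply, integral_one_sub_cos_sub_integral_one_sub_cos hu hmass,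
    neg_neg]

lemma integral_abs_rpow_sub_integral_abs_rpow_eq (hγ : 0 < γ) (hγ1 : γ ≤ 1) (hu : Measurable u)
    (hP : Integrable (fun x => |u x| ^ γ) P) (hM : Integrable (fun x => |u x| ^ γ) M)
    (hmass : P univ = M univ) :
    ∫ x, |u x| ^ γ ∂P - ∫ x, |u x| ^ γ ∂M = -((cosKernelConst γ)⁻¹ *
      ∫ ξ, (∫ x, cos (ξ * u x) ∂P - ∫ x, cos (ξ * u x) ∂M) * |ξ| ^ (-1 - γ)) := by
  rw [integral_abs_rpow_eq hγ hγ1 hu hP, integral_abs_rpow_eq hγ hγ1 hu hM, ← mul_sub,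
    ← integral_sub (integrable_integral_one_sub_cos_mul_abs_rpow hγ hγ1 hu hP)
    (integrable_integral_one_sub_cos_mul_abs_rpow hγ hγ1 hu hM)]
  simp_rw [integral_one_sub_cos_sub_integral_one_sub_cos hu hmass, integral_neg, mul_neg]

end Subordination

lemma integral_cos_mul_sub_prod (a b : Measure ℝ) [IsFiniteMeasure a] [IsFiniteMeasure b]
    (ξ : ℝ) :
    ∫ z : ℝ × ℝ, cos (ξ * (z.1 - z.2)) ∂(a.prod b) = (charFun a ξ * conj (charFun b ξ)).re := by
  rw [← charFun_neg, charFun_apply_real, charFun_apply_real, ← integral_prod_mul,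
    ← Complex.reCLM_apply, ← ContinuousLinearMap.integral_comp_comm]
  · refine integral_congr_ae (ae_of_all _ fun z => ?_)
    simp only [Complex.reCLM_apply]
    rw [← Complex.exp_add, ← Complex.exp_ofReal_mul_I_re]
    congr 2
    push_cast
    ring
  · refine Integrable.of_bound (by fun_prop) 1 (ae_of_all _ fun z => ?_)
    simp [Complex.norm_exp]

lemma integral_cos_mul_sub_sub_eq_norm_charFun_sub_sq (p m : Measure ℝ) [IsFiniteMeasure p]
    [IsFiniteMeasure m] (ξ : ℝ) :
    ∫ z : ℝ × ℝ, cos (ξ * (z.1 - z.2)) ∂(p.prod p + m.prod m)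
      - ∫ z : ℝ × ℝ, cos (ξ * (z.1 - z.2)) ∂(p.prod m + m.prod p)
      = ‖charFun p ξ - charFun m ξ‖ ^ 2 := by
  have hcos (ρ : Measure (ℝ × ℝ)) [IsFiniteMeasure ρ] :
      Integrable (fun z : ℝ × ℝ => cos (ξ * (z.1 - z.2))) ρ :=
    Integrable.of_bound (by fun_prop) 1 (ae_of_all _ fun z => by simpa using abs_cos_le_one _)
  simp only [integral_add_measure (hcos _) (hcos _), integral_cos_mul_sub_prod, Complex.sq_norm,
    Complex.normSq_apply, Complex.mul_re, Complex.conj_re, Complex.conj_im, Complex.sub_re,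
    Complex.sub_im]
  ring

lemma MeasureTheory.Measure.add_prod_add_self {α : Type*} [MeasurableSpace α] (p m : Measure α)
    [SFinite p] [SFinite m] :
    (p + m).prod (p + m) = (p.prod p + m.prod m) + (p.prod m + m.prod p) := by
  rw [Measure.add_prod, Measure.prod_add, Measure.prod_add]
  abel

/-- The energy `I(p - m)` of the signed measure `p - m`. -/
noncomputable def rieszEnergy (γ : ℝ) (p m : Measure ℝ) : ℝ :=
  (∫ x, ∫ y, |x - y| ^ γ ∂p ∂p) - (∫ x, ∫ y, |x - y| ^ γ ∂m ∂p) -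
    (∫ x, ∫ y, |x - y| ^ γ ∂p ∂m) + ∫ x, ∫ y, |x - y| ^ γ ∂m ∂m

section Energy

variable {γ : ℝ} {p m : Measure ℝ} [IsFiniteMeasure p] [IsFiniteMeasure m]

lemma rieszEnergy_eq_integral_sub
    (hint : Integrable (fun z : ℝ × ℝ => |z.1 - z.2| ^ γ) ((p + m).prod (p + m))) :
    rieszEnergy γ p m = ∫ z : ℝ × ℝ, |z.1 - z.2| ^ γ ∂(p.prod p + m.prod m)
      - ∫ z : ℝ × ℝ, |z.1 - z.2| ^ γ ∂(p.prod m + m.prod p) := by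
  rw [Measure.add_prod_add_self, integrable_add_measure, integrable_add_measure,
    integrable_add_measure] at hint
  obtain ⟨⟨hpp, hmm⟩, hpm, hmp⟩ := hint
  rw [integral_add_measure hpp hmm, integral_add_measure hpm hmp, integral_prod _ hpp,
    integral_prod _ hmm, integral_prod _ hpm, integral_prod _ hmp, rieszEnergy]
  ring

lemma rieszEnergy_eq (hγ : 0 < γ) (hγ1 : γ ≤ 1)
    (hint : Integrable (fun z : ℝ × ℝ => |z.1 - z.2| ^ γ) ((p + m).prod (p + m)))
    (hmass : p univ = m univ) :
    rieszEnergy γ p m = -((cosKernelConst γ)⁻¹ *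
      ∫ ξ, ‖charFun p ξ - charFun m ξ‖ ^ 2 * |ξ| ^ (-1 - γ)) ∧
    Integrable fun ξ => ‖charFun p ξ - charFun m ξ‖ ^ 2 * |ξ| ^ (-1 - γ) := by
  have hmass' : (p.prod p + m.prod m) univ = (p.prod m + m.prod p) univ := by
    simp only [Measure.add_apply, ← univ_prod_univ, Measure.prod_prod, hmass]
  rw [rieszEnergy_eq_integral_sub hint]
  rw [Measure.add_prod_add_self, integrable_add_measure] at hint
  have hu : Measurable fun z : ℝ × ℝ => z.1 - z.2 := by fun_prop
  simp_rw [← integral_cos_mul_sub_sub_eq_norm_charFun_sub_sq]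
  exact ⟨integral_abs_rpow_sub_integral_abs_rpow_eq hγ hγ1 hu hint.1 hint.2 hmass',
    integrable_integral_cos_sub_mul_abs_rpow hγ hγ1 hu hint.1 hint.2 hmass'⟩

lemma eq_of_integral_norm_charFun_sub_sq_mul_eq_zero
    (hint : Integrable fun ξ => ‖charFun p ξ - charFun m ξ‖ ^ 2 * |ξ| ^ (-1 - γ))
    (h0 : ∫ ξ, ‖charFun p ξ - charFun m ξ‖ ^ 2 * |ξ| ^ (-1 - γ) = 0) : p = m := by
  have hae := (integral_eq_zero_iff_of_nonneg (fun ξ => by positivity) hint).1 h0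
  have hae' : (fun ξ => ‖charFun p ξ - charFun m ξ‖ ^ 2) =ᵐ[volume] fun _ => 0 := by
    filter_upwards [hae, volume.ae_ne 0] with ξ hξ hξ0
    exact (mul_eq_zero.1 hξ).resolve_right (rpow_pos_of_pos (abs_pos.2 hξ0) _).ne'
  have h := (Continuous.ae_eq_iff_eq volume (by fun_prop) continuous_const).1 hae'
  refine Measure.ext_of_charFun (funext fun ξ => ?_)
  simpa [sub_eq_zero] using congrFun h ξ

theorem rieszEnergy_nonpos (hγ : 0 < γ) (hγ1 : γ ≤ 1)
    (hint : Integrable (fun z : ℝ × ℝ => |z.1 - z.2| ^ γ) ((p + m).prod (p + m)))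
    (hmass : p univ = m univ) : rieszEnergy γ p m ≤ 0 := by
  rw [(rieszEnergy_eq hγ hγ1 hint hmass).1, neg_nonpos]
  exact mul_nonneg (inv_nonneg.2 (cosKernelConst_pos hγ hγ1).le)
    (integral_nonneg fun ξ => by positivity)

theorem rieszEnergy_eq_zero_iff (hγ : 0 < γ) (hγ1 : γ ≤ 1)
    (hint : Integrable (fun z : ℝ × ℝ => |z.1 - z.2| ^ γ) ((p + m).prod (p + m)))
    (hmass : p univ = m univ) : rieszEnergy γ p m = 0 ↔ p = m := by
  refine ⟨fun h => ?_, fun h => by rw [h, rieszEnergy]; ring⟩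
  obtain ⟨heq, hint'⟩ := rieszEnergy_eq hγ hγ1 hint hmass
  rw [heq, neg_eq_zero, mul_eq_zero, inv_eq_zero] at h
  exact eq_of_integral_norm_charFun_sub_sq_mul_eq_zero hint'
    (h.resolve_left (cosKernelConst_pos hγ hγ1).ne')

end Energy

lemma integrable_abs_sub_rpow_prod {γ : ℝ} (hγ : 0 ≤ γ) {a : Measure ℝ} [IsFiniteMeasure a]
    (ha : a (Icc (0 : ℝ) 1)ᶜ = 0) :
    Integrable (fun z : ℝ × ℝ => |z.1 - z.2| ^ γ) (a.prod a) := by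
  have hmem : ∀ᵐ x ∂a, x ∈ Icc (0 : ℝ) 1 := mem_ae_iff.2 ha
  refine Integrable.of_bound (by fun_prop) 1 ?_
  filter_upwards [Measure.quasiMeasurePreserving_fst.ae hmem,
    Measure.quasiMeasurePreserving_snd.ae hmem] with z hz1 hz2
  rw [norm_of_nonneg (by positivity)]
  refine rpow_le_one (abs_nonneg _) (abs_le.2 ⟨?_, ?_⟩) hγ <;>
    linarith [hz1.1, hz1.2, hz2.1, hz2.2]

/-- Let `μ = μp - μm` be a finite signed Borel measure on `[0,1]`
(written through its decomposition into two finite measures supported on `[0,1]`)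
with `μ([0,1]) = 0`.  Then
`I(μ) = ∫∫ |x-y|^γ dμ(x) dμ(y) ≤ 0`, with equality iff `μ(E) = 0` for every Borel
`E ⊆ [0,1]`. -/
theorem stmt15 (γ : ℝ) (hγ : 0 < γ) (hγ1 : γ < 1)
    (μp μm : Measure ℝ) [IsFiniteMeasure μp] [IsFiniteMeasure μm]
    (hsuppp : μp (Set.Icc (0 : ℝ) 1)ᶜ = 0) (hsuppm : μm (Set.Icc (0 : ℝ) 1)ᶜ = 0)
    (hzero : μp (Set.Icc (0 : ℝ) 1) = μm (Set.Icc (0 : ℝ) 1)) :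
    ((∫ x, ∫ y, |x - y| ^ γ ∂μp ∂μp) - (∫ x, ∫ y, |x - y| ^ γ ∂μm ∂μp) -
          (∫ x, ∫ y, |x - y| ^ γ ∂μp ∂μm) + ∫ x, ∫ y, |x - y| ^ γ ∂μm ∂μm) ≤ 0 ∧
      (((∫ x, ∫ y, |x - y| ^ γ ∂μp ∂μp) - (∫ x, ∫ y, |x - y| ^ γ ∂μm ∂μp) -
            (∫ x, ∫ y, |x - y| ^ γ ∂μp ∂μm) + ∫ x, ∫ y, |x - y| ^ γ ∂μm ∂μm) = 0 ↔
        ∀ E : Set ℝ, MeasurableSet E → μp E = μm E) := by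
  have hint := integrable_abs_sub_rpow_prod hγ.le (a := μp + μm) (by simp [hsuppp, hsuppm])
  have hmass : μp univ = μm univ := by
    rw [← measure_add_measure_compl measurableSet_Icc, hsuppp, hzero,
      ← measure_add_measure_compl (μ := μm) measurableSet_Icc, hsuppm]
  refine ⟨rieszEnergy_nonpos hγ hγ1.le hint hmass, ?_⟩
  rw [← Measure.ext_iff]
  exact rieszEnergy_eq_zero_iff hγ hγ1.le hint hmass
end
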